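/- The arrays u_r and U_r are mutually inverse: for all n ≥ i ≥ 0, Σ_{k=i}^{n} u_r(n,k)·U_r(k,i) = δ_{n,i} and Σ_{k=i}^{n} U_r(n,k)·u_r(k,i) = δ_{n,i}. -/

import Mathlib

/-! Row `n` of `centralu r` is the coefficient vector of `P n = ∏_{i<n} (X - (i² + r))`, and since
`X * P k = P (k + 1) + (k² + r) * P k`, row `n` of `centralU r` expands `X ^ n` in the basis
`P 0, P 1, …`. Substituting the first expansion into the second and comparing coefficients gives
`centralU * centralu = 1`. Both arrays are lower triangular, so on the indices `< N` they are square
matrices, and a one-sided inverse of a square matrix over a commutative ring is two-sided. -/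

/-- `centralu r n k` is the r-central factorial number with even indices of the first kind. -/
def centralu (r : ℕ) : ℕ → ℕ → ℤ
  | 0, 0 => 1
  | 0, _ + 1 => 0
  | n + 1, 0 => (-1) ^ (n + 1) * ∏ i ∈ Finset.range (n + 1), ((i : ℤ) ^ 2 + r)
  | n + 1, k + 1 => centralu r n k - ((n : ℤ) ^ 2 + r) * centralu r n (k + 1)

/-- `centralU r n k` is the r-central factorial number with even indices of the second kind. -/
def centralU (r : ℕ) : ℕ → ℕ → ℤ
  | 0, 0 => 1
  | 0, _ + 1 => 0
  | n + 1, 0 => (r : ℤ) ^ (n + 1)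
  | n + 1, k + 1 => centralU r n k + (((k : ℤ) + 1) ^ 2 + r) * centralU r n (k + 1)

open Finset Polynomial

lemma centralu_eq_zero_of_lt (r : ℕ) {n k : ℕ} (h : n < k) : centralu r n k = 0 := by
  induction n generalizing k with
  | zero => obtain ⟨k, rfl⟩ := Nat.exists_eq_add_one_of_ne_zero h.ne'; rfl
  | succ n ih =>
    obtain ⟨k, rfl⟩ := Nat.exists_eq_add_one_of_ne_zero (n.succ_pos.trans h).ne'
    rw [centralu, ih (by omega), ih (by omega), mul_zero, sub_zero]

lemma centralU_eq_zero_of_lt (r : ℕ) {n k : ℕ} (h : n < k) : centralU r n k = 0 := by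
  induction n generalizing k with
  | zero => obtain ⟨k, rfl⟩ := Nat.exists_eq_add_one_of_ne_zero h.ne'; rfl
  | succ n ih =>
    obtain ⟨k, rfl⟩ := Nat.exists_eq_add_one_of_ne_zero (n.succ_pos.trans h).ne'
    rw [centralU, ih (by omega), ih (by omega), mul_zero, add_zero]

lemma centralU_zero_right (r n : ℕ) : centralU r n 0 = (r : ℤ) ^ n := by
  cases n <;> rfl

noncomputable def centralPoly (r n : ℕ) : ℤ[X] :=
  ∏ i ∈ range n, (X - C ((i : ℤ) ^ 2 + r))

lemma centralPoly_succ (r n : ℕ) :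
    centralPoly r (n + 1) = centralPoly r n * (X - C ((n : ℤ) ^ 2 + r)) :=
  prod_range_succ _ _

lemma coeff_centralPoly (r n k : ℕ) : (centralPoly r n).coeff k = centralu r n k := by
  induction n generalizing k with
  | zero => cases k <;> simp [centralPoly, centralu, coeff_one]
  | succ n ih =>
    cases k with
    | zero =>
      simp only [coeff_zero_eq_eval_zero, centralPoly, eval_prod, eval_sub, eval_X, eval_C,
        zero_sub, prod_neg, card_range]
      rfl
    | succ k => rw [centralPoly_succ, coeff_mul_X_sub_C, ih, ih, centralu, mul_comm]

lemma X_mul_centralPoly (r k : ℕ) :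
    X * centralPoly r k = centralPoly r (k + 1) + C ((k : ℤ) ^ 2 + r) * centralPoly r k := by
  rw [centralPoly_succ]
  ring

lemma X_pow_eq_sum_centralU (r n : ℕ) :
    (X : ℤ[X]) ^ n = ∑ k ∈ range (n + 1), C (centralU r n k) * centralPoly r k := by
  induction n with
  | zero => simp [centralU, centralPoly]
  | succ n ih =>
    have hshift : ∑ k ∈ range (n + 1),
          C ((((k + 1 : ℕ) : ℤ) ^ 2 + r) * centralU r n (k + 1)) * centralPoly r (k + 1) +
        C (((0 : ℕ) ^ 2 + r : ℤ) * centralU r n 0) * centralPoly r 0 =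
        ∑ k ∈ range (n + 1), C (((k : ℤ) ^ 2 + r) * centralU r n k) * centralPoly r k := by
      rw [← sum_range_succ' (fun k => C (((k : ℤ) ^ 2 + r) * centralU r n k) * centralPoly r k),
        sum_range_succ, centralU_eq_zero_of_lt r n.lt_succ_self, mul_zero, C_0, zero_mul,
        add_zero]
    calc (X : ℤ[X]) ^ (n + 1)
        = ∑ k ∈ range (n + 1), (C (centralU r n k) * centralPoly r (k + 1) +
            C (((k : ℤ) ^ 2 + r) * centralU r n k) * centralPoly r k) := by
          rw [pow_succ', ih, mul_sum]
          refine sum_congr rfl fun k _ => ?_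
          rw [mul_left_comm, X_mul_centralPoly, C_mul]
          ring
      _ = ∑ k ∈ range (n + 1), C (centralU r n k) * centralPoly r (k + 1) +
            (∑ k ∈ range (n + 1),
              C ((((k + 1 : ℕ) : ℤ) ^ 2 + r) * centralU r n (k + 1)) * centralPoly r (k + 1) +
            C (((0 : ℕ) ^ 2 + r : ℤ) * centralU r n 0) * centralPoly r 0) := by
          rw [sum_add_distrib, hshift]
      _ = ∑ k ∈ range (n + 2), C (centralU r (n + 1) k) * centralPoly r k := by
          rw [sum_range_succ' _ (n + 1), ← add_assoc, ← sum_add_distrib]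
          congr 1
          · refine sum_congr rfl fun k _ => ?_
            rw [centralU, C_add, C_mul, C_mul]
            push_cast
            ring
          · simp [centralU_zero_right, pow_succ']

lemma sum_range_mul_eq_ite_comm {R : Type*} [CommRing R] {A B : ℕ → ℕ → R}
    {N : ℕ} (h : ∀ n < N, ∀ i < N, ∑ k ∈ range N, A n k * B k i = if n = i then 1 else 0)
    {n i : ℕ} (hn : n < N) (hi : i < N) :
    ∑ k ∈ range N, B n k * A k i = if n = i then 1 else 0 := by
  let toMatrix (M : ℕ → ℕ → R) : Matrix (Fin N) (Fin N) R := Matrix.of fun a b => M a b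
  have hAB : toMatrix A * toMatrix B = 1 := by
    ext a b
    simp [toMatrix, Matrix.mul_apply, Fin.sum_univ_eq_sum_range (fun k => A a k * B k b),
      h a a.isLt b b.isLt, Matrix.one_apply, Fin.ext_iff]
  have hBA : toMatrix B * toMatrix A = 1 := mul_eq_one_comm.mp hAB
  simpa [toMatrix, Matrix.mul_apply, Fin.sum_univ_eq_sum_range (fun k => B n k * A k i),
    Matrix.one_apply] using congrFun (congrFun hBA ⟨n, hn⟩) ⟨i, hi⟩

lemma sum_range_centralU_mul_centralu (r : ℕ) {n N : ℕ} (hn : n < N) (i : ℕ) :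
    ∑ k ∈ range N, centralU r n k * centralu r k i = if n = i then 1 else 0 := by
  have hX : (X : ℤ[X]) ^ n = ∑ k ∈ range N, C (centralU r n k) * centralPoly r k := by
    rw [X_pow_eq_sum_centralU r n]
    refine sum_subset (range_subset_range.mpr hn) fun k _ hk => ?_
    rw [centralU_eq_zero_of_lt r (by simpa using hk), C_0, zero_mul]
  simpa [finsetSum_coeff, coeff_C_mul, coeff_centralPoly, coeff_X_pow, eq_comm] using
    congrArg (coeff · i) hX

lemma sum_range_centralu_mul_centralU (r : ℕ) {n N : ℕ} (hn : n < N) (i : ℕ) :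
    ∑ k ∈ range N, centralu r n k * centralU r k i = if n = i then 1 else 0 := by
  rcases lt_or_ge i N with hi | hi
  · exact sum_range_mul_eq_ite_comm
      (fun m hm j _ => sum_range_centralU_mul_centralu r hm j) hn hi
  · rw [if_neg (by omega)]
    exact sum_eq_zero fun k hk => by
      rw [centralU_eq_zero_of_lt r ((mem_range.mp hk).trans_le hi), mul_zero]

lemma sum_Icc_eq_sum_range {M : Type*} [AddCommMonoid M] {f : ℕ → M} {i : ℕ}
    (hf : ∀ k < i, f k = 0) (n : ℕ) : ∑ k ∈ Icc i n, f k = ∑ k ∈ range (n + 1), f k :=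
  sum_subset (fun k hk => by simp only [mem_Icc, mem_range] at hk ⊢; omega)
    fun k hkn hki => hf k (by simp only [mem_Icc, mem_range, not_and, not_le] at hkn hki; omega)

theorem centralu_centralU_orthogonal_general (r n i : ℕ) :
    (∑ k ∈ Finset.Icc i n, centralu r n k * centralU r k i) =
        (if n = i then 1 else 0) ∧
      (∑ k ∈ Finset.Icc i n, centralU r n k * centralu r k i) =
        (if n = i then 1 else 0) := by
  constructor
  · rw [sum_Icc_eq_sum_range fun k hk => by rw [centralU_eq_zero_of_lt r hk, mul_zero]]
    exact sum_range_centralu_mul_centralU r n.lt_succ_self i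
  · rw [sum_Icc_eq_sum_range fun k hk => by rw [centralu_eq_zero_of_lt r hk, mul_zero]]
    exact sum_range_centralU_mul_centralu r n.lt_succ_self i

theorem centralu_centralU_orthogonal (r n i : ℕ) (h : i ≤ n) :
    (∑ k ∈ Finset.Icc i n, centralu r n k * centralU r k i) =
        (if n = i then 1 else 0) ∧
      (∑ k ∈ Finset.Icc i n, centralU r n k * centralu r k i) =
        (if n = i then 1 else 0) :=
  centralu_centralU_orthogonal_general r n i
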